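/- Define Γ = ⋂_{x∈M} cl O⁺(x). (i) If Γ is a nonempty subset of M, then Γ is a closed invariant control set. (ii) If M is compact, positively invariant, and contains exactly one invariant control set C, then C = Γ; in particular C is closed. (iii) If a compact positively invariant set M contains two closed invariant control sets, then Γ is empty. -/

import Mathlib

open MeasureTheory Set Topology

/-- A control-affine system `ẋ = f₀(x) + ∑ vᵢ(t) fᵢ(x)` on `ℝ^d` with Lipschitz
continuous vector fields and compact control range `V ⊆ ℝ^m`.  The (unique, global)
solutions are bundled as the data `φ` together with their defining properties. -/
structure CAS (d m : ℕ) where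
  /-- the drift vector field -/
  f0 : (Fin d → ℝ) → (Fin d → ℝ)
  /-- the control vector fields -/
  f : Fin m → (Fin d → ℝ) → (Fin d → ℝ)
  /-- the control range -/
  V : Set (Fin m → ℝ)
  lip0 : ∃ K, LipschitzWith K f0
  lip : ∀ i, ∃ K, LipschitzWith K (f i)
  V_compact : IsCompact V
  /-- the solution map: `φ x v t` is the solution at time `t` starting at `x` with control `v` -/
  φ : (Fin d → ℝ) → (ℝ → (Fin m → ℝ)) → ℝ → (Fin d → ℝ)
  φ_init : ∀ x v, φ x v 0 = x
  φ_cont : ∀ x v, Continuous (φ x v)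
  /-- solutions are (Carathéodory) solutions of the ODE -/
  φ_sol : ∀ (x : Fin d → ℝ) (v : ℝ → (Fin m → ℝ)), Measurable v → (∀ t, v t ∈ V) →
    ∀ t, 0 ≤ t →
      φ x v t = x + ∫ s in (0:ℝ)..t, (f0 (φ x v s) + ∑ i, v s i • f (i) (φ x v s))

namespace CAS

variable {d m : ℕ}

/-- the set of admissible controls -/
def ctrl (S : CAS d m) : Set (ℝ → (Fin m → ℝ)) :=
  {v | Measurable v ∧ ∀ t, v t ∈ S.V}

/-- a control is piecewise constant if it has only finitely many discontinuities on
every bounded interval, i.e. it is constant between the members of a sequence of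
switching times tending to infinity -/
def PiecewiseConst (v : ℝ → (Fin m → ℝ)) : Prop :=
  ∃ τ : ℕ → ℝ, τ 0 = 0 ∧ StrictMono τ ∧ Filter.Tendsto τ Filter.atTop Filter.atTop ∧
    ∀ n, ∀ t ∈ Ico (τ n) (τ (n + 1)), v t = v (τ n)

/-- the reachable set from `x` -/
def reach (S : CAS d m) (x : Fin d → ℝ) : Set (Fin d → ℝ) :=
  {y | ∃ v ∈ S.ctrl, ∃ t ≥ (0:ℝ), S.φ x v t = y}

/-- the set reachable from `x` with piecewise constant controls -/
def reachPC (S : CAS d m) (x : Fin d → ℝ) : Set (Fin d → ℝ) :=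
  {y | ∃ v ∈ S.ctrl, PiecewiseConst v ∧ ∃ t ≥ (0:ℝ), S.φ x v t = y}

/-- the reachable set from `x` up to time `T` -/
def reachLe (S : CAS d m) (T : ℝ) (x : Fin d → ℝ) : Set (Fin d → ℝ) :=
  {y | ∃ v ∈ S.ctrl, ∃ t ∈ Icc (0:ℝ) T, S.φ x v t = y}

/-- the controllable set to `x` up to time `T` -/
def contrLe (S : CAS d m) (T : ℝ) (x : Fin d → ℝ) : Set (Fin d → ℝ) :=
  {y | ∃ v ∈ S.ctrl, ∃ t ∈ Icc (0:ℝ) T, S.φ y v t = x}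

/-- positive invariance of a set -/
def posInv (S : CAS d m) (M : Set (Fin d → ℝ)) : Prop :=
  ∀ x ∈ M, ∀ v ∈ S.ctrl, ∀ t ≥ (0:ℝ), S.φ x v t ∈ M

/-- invariance of a set -/
def inv (S : CAS d m) (M : Set (Fin d → ℝ)) : Prop :=
  ∀ t ≥ (0:ℝ), {y | ∃ x ∈ M, ∃ v ∈ S.ctrl, S.φ x v t = y} = M

/-- the two defining properties (i) controlled invariance and (ii) approximate
reachability of a control set -/
def controlSetProps (S : CAS d m) (D : Set (Fin d → ℝ)) : Prop :=
  (∀ x ∈ D, ∃ v ∈ S.ctrl, ∀ t ≥ (0:ℝ), S.φ x v t ∈ D) ∧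
  (∀ x ∈ D, D ⊆ closure (S.reach x))

/-- a control set: a maximal nonempty set with the properties `controlSetProps` -/
def isControlSet (S : CAS d m) (D : Set (Fin d → ℝ)) : Prop :=
  D.Nonempty ∧ S.controlSetProps D ∧
  ∀ D', D ⊆ D' → S.controlSetProps D' → D' = D

/-- an invariant control set -/
def isInvControlSet (S : CAS d m) (C : Set (Fin d → ℝ)) : Prop :=
  S.isControlSet C ∧ ∀ x ∈ C, closure C = closure (S.reach x)

/-- local accessibility at a point -/
def locAccAt (S : CAS d m) (x : Fin d → ℝ) : Prop :=
  ∀ T > (0:ℝ), ∀ N ∈ 𝓝 x,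
    (interior (S.reachLe T x) ∩ N).Nonempty ∧ (interior (S.contrLe T x) ∩ N).Nonempty

/-- local accessibility on a set -/
def locAccOn (S : CAS d m) (M : Set (Fin d → ℝ)) : Prop :=
  ∀ x ∈ M, S.locAccAt x

/-- the domain of attraction of a set -/
def domAttr (S : CAS d m) (C : Set (Fin d → ℝ)) : Set (Fin d → ℝ) :=
  {x | (closure (S.reach x) ∩ C).Nonempty}

/-- the strict domain of attraction of an invariant control set -/
def domAttrStrict (S : CAS d m) (C : Set (Fin d → ℝ)) : Set (Fin d → ℝ) :=
  {x | (closure (S.reach x) ∩ C).Nonempty ∧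
    ∀ C', S.isInvControlSet C' → (closure (S.reach x) ∩ C').Nonempty → C' = C}

end CAS

/-! Orbit closures are monotone: `y ∈ cl 𝒪⁺(x)` implies `cl 𝒪⁺(y) ⊆ cl 𝒪⁺(x)`, by concatenating
controls and by continuous dependence on the initial value (Grönwall). Hence a nonempty set `A`
with `cl 𝒪⁺(p) = A` for every `p ∈ A` is a closed invariant control set, and `Γ ⊆ M` is such a set.
In a compact positively invariant `M`, Zorn's lemma yields such a set inside every orbit closure;
if `C` is the only invariant control set in `M`, all of them equal `C`, so `C ⊆ Γ ⊆ M` and `Γ = C`.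
Finally, two closed invariant control sets through a common point coincide, and a closed invariant
control set in `M` contains `Γ`. -/

theorem le_mul_exp_of_le_add_integral {L T δ : ℝ} (hL : 0 < L) {g : ℝ → ℝ} (hg : Continuous g)
    (hle : ∀ t ∈ Icc (0:ℝ) T, g t ≤ δ + ∫ s in (0:ℝ)..t, L * g s) :
    ∀ t ∈ Icc (0:ℝ) T, g t ≤ δ * Real.exp (L * t) := by
  set h : ℝ → ℝ := fun t => ∫ s in (0:ℝ)..t, L * g s
  have hder : ∀ t, HasDerivAt h (L * g t) t := fun t =>
    (hg.const_mul L).integral_hasStrictDerivAt 0 t |>.hasDerivAt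
  have hh : ∀ t ∈ Icc (0:ℝ) T, h t ≤ δ * (Real.exp (L * t) - 1) := by
    intro t ht
    have := le_gronwallBound_of_liminf_deriv_right_le (δ := 0) (K := L) (ε := L * δ)
      (fun t _ => (hder t).continuousAt.continuousWithinAt)
      (fun t _ r hr => (hder t).hasDerivWithinAt.liminf_right_slope_le hr)
      (by simp [h]) (fun t ht => by nlinarith [hle t (Ico_subset_Icc_self ht)]) t ht
    simpa only [gronwallBound_of_K_ne_0 hL.ne', sub_zero, zero_mul, zero_add,
      mul_div_cancel_left₀ _ hL.ne'] using this
  intro t ht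
  linarith [hle t ht, hh t ht]

namespace CAS

variable {d m : ℕ} (S : CAS d m)

def rhs (v : ℝ → Fin m → ℝ) (s : ℝ) (y : Fin d → ℝ) : Fin d → ℝ :=
  S.f0 y + ∑ i, v s i • S.f i y

lemma φ_eq_integral {v : ℝ → Fin m → ℝ} (hv : v ∈ S.ctrl) (x : Fin d → ℝ) {t : ℝ}
    (ht : 0 ≤ t) : S.φ x v t = x + ∫ s in (0:ℝ)..t, S.rhs v s (S.φ x v s) :=
  S.φ_sol x v hv.1 hv.2 t ht

lemma exists_abs_le_of_mem_V : ∃ B : ℝ, 0 ≤ B ∧ ∀ u ∈ S.V, ∀ i, |u i| ≤ B := by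
  obtain ⟨B, hB⟩ := S.V_compact.exists_bound_of_continuousOn continuousOn_id
  exact ⟨max B 0, le_max_right _ _, fun u hu i =>
    ((norm_le_pi_norm u i).trans (hB u hu)).trans (le_max_left _ _)⟩

lemma exists_lipschitz_rhs : ∃ L : ℝ, 0 < L ∧ ∀ v : ℝ → Fin m → ℝ, (∀ t, v t ∈ S.V) →
    ∀ s y z, ‖S.rhs v s y - S.rhs v s z‖ ≤ L * ‖y - z‖ := by
  obtain ⟨B, hB0, hB⟩ := S.exists_abs_le_of_mem_V
  obtain ⟨K0, hK0⟩ := S.lip0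
  choose K hK using S.lip
  refine ⟨K0 + ∑ i, B * K i + 1, by positivity, fun v hv s y z => ?_⟩
  have h0 : ‖S.f0 y - S.f0 z‖ ≤ K0 * ‖y - z‖ := by
    simpa only [dist_eq_norm] using hK0.dist_le_mul y z
  have hi : ∀ i, ‖v s i • S.f i y - v s i • S.f i z‖ ≤ B * K i * ‖y - z‖ := fun i => by
    rw [← smul_sub, norm_smul, mul_assoc]
    have := (hK i).dist_le_mul y z
    rw [dist_eq_norm, dist_eq_norm] at this
    exact mul_le_mul (hB _ (hv s) i) this (norm_nonneg _) hB0
  calc ‖S.rhs v s y - S.rhs v s z‖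
      = ‖(S.f0 y - S.f0 z) + ∑ i, (v s i • S.f i y - v s i • S.f i z)‖ := by
        rw [rhs, rhs, Finset.sum_sub_distrib]
        abel_nf
    _ ≤ K0 * ‖y - z‖ + ∑ i, B * K i * ‖y - z‖ :=
        (norm_add_le _ _).trans <| add_le_add h0 <|
          (norm_sum_le _ _).trans (Finset.sum_le_sum fun i _ => hi i)
    _ ≤ (K0 + ∑ i, B * K i + 1) * ‖y - z‖ := by
        rw [← Finset.sum_mul]
        nlinarith [norm_nonneg (y - z)]

lemma intervalIntegrable_ctrl_apply {v : ℝ → Fin m → ℝ} (hv : v ∈ S.ctrl) (i : Fin m)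
    (a b : ℝ) : IntervalIntegrable (fun s => v s i) volume a b := by
  obtain ⟨B, -, hB⟩ := S.exists_abs_le_of_mem_V
  rw [intervalIntegrable_iff]
  exact IntegrableOn.of_bound measure_Ioc_lt_top
    ((measurable_pi_apply i).comp hv.1).aestronglyMeasurable B
    (Filter.Eventually.of_forall fun s => hB _ (hv.2 s) i)

lemma intervalIntegrable_rhs {v : ℝ → Fin m → ℝ} (hv : v ∈ S.ctrl)
    {γ : ℝ → Fin d → ℝ} (hγ : Continuous γ) (a b : ℝ) :
    IntervalIntegrable (fun s => S.rhs v s (γ s)) volume a b := by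
  obtain ⟨K0, hK0⟩ := S.lip0
  choose K hK using S.lip
  refine ((hK0.continuous.comp hγ).intervalIntegrable a b).add ?_
  have := IntervalIntegrable.sum Finset.univ fun i _ =>
    (S.intervalIntegrable_ctrl_apply hv i a b).smul_continuousOn
      ((hK i).continuous.comp hγ).continuousOn
  rw [Finset.sum_fn] at this
  exact this

lemma norm_sub_le_of_integral_eq {v : ℝ → Fin m → ℝ} (hv : v ∈ S.ctrl) {L : ℝ} (hL : 0 < L)
    (hlip : ∀ s y z, ‖S.rhs v s y - S.rhs v s z‖ ≤ L * ‖y - z‖)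
    {α β : ℝ → Fin d → ℝ} (hαc : Continuous α) (hβc : Continuous β)
    {a b : Fin d → ℝ} {T : ℝ}
    (hα : ∀ t ∈ Icc (0:ℝ) T, α t = a + ∫ s in (0:ℝ)..t, S.rhs v s (α s))
    (hβ : ∀ t ∈ Icc (0:ℝ) T, β t = b + ∫ s in (0:ℝ)..t, S.rhs v s (β s)) :
    ∀ t ∈ Icc (0:ℝ) T, ‖α t - β t‖ ≤ ‖a - b‖ * Real.exp (L * t) := by
  refine le_mul_exp_of_le_add_integral hL (by fun_prop) fun t ht => ?_
  have hiα := S.intervalIntegrable_rhs hv hαc 0 t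
  have hiβ := S.intervalIntegrable_rhs hv hβc 0 t
  have hsub : α t - β t = (a - b) + ∫ s in (0:ℝ)..t, (S.rhs v s (α s) - S.rhs v s (β s)) := by
    rw [intervalIntegral.integral_sub hiα hiβ, hα t ht, hβ t ht]
    abel
  calc ‖α t - β t‖
      ≤ ‖a - b‖ + ∫ s in (0:ℝ)..t, ‖S.rhs v s (α s) - S.rhs v s (β s)‖ := by
        rw [hsub]
        exact (norm_add_le _ _).trans
          (add_le_add_right (intervalIntegral.norm_integral_le_integral_norm ht.1) _)
    _ ≤ ‖a - b‖ + ∫ s in (0:ℝ)..t, L * ‖α s - β s‖ := by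
        gcongr
        exact intervalIntegral.integral_mono_on ht.1 (hiα.sub hiβ).norm
          (Continuous.intervalIntegrable (by fun_prop) 0 t) fun s _ => hlip s (α s) (β s)

lemma eq_φ_of_integral_eq {v : ℝ → Fin m → ℝ} (hv : v ∈ S.ctrl)
    {α : ℝ → Fin d → ℝ} (hαc : Continuous α) {a : Fin d → ℝ} {T : ℝ}
    (hα : ∀ t ∈ Icc (0:ℝ) T, α t = a + ∫ s in (0:ℝ)..t, S.rhs v s (α s)) :
    ∀ t ∈ Icc (0:ℝ) T, α t = S.φ a v t := by
  obtain ⟨L, hL, hlip⟩ := S.exists_lipschitz_rhs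
  intro t ht
  simpa [sub_eq_zero] using S.norm_sub_le_of_integral_eq hv hL (hlip v hv.2) hαc
    (S.φ_cont a v) hα (fun s hs => S.φ_eq_integral hv a hs.1) t ht

lemma continuous_φ_initial {v : ℝ → Fin m → ℝ} (hv : v ∈ S.ctrl) {t : ℝ} (ht : 0 ≤ t) :
    Continuous fun x => S.φ x v t := by
  obtain ⟨L, hL, hlip⟩ := S.exists_lipschitz_rhs
  refine LipschitzWith.continuous (K := ⟨Real.exp (L * t), (Real.exp_pos _).le⟩) <|
    LipschitzWith.of_dist_le_mul fun x y => ?_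
  rw [dist_eq_norm, dist_eq_norm, mul_comm]
  exact S.norm_sub_le_of_integral_eq hv hL (hlip v hv.2) (S.φ_cont x v) (S.φ_cont y v)
    (fun s hs => S.φ_eq_integral hv x hs.1) (fun s hs => S.φ_eq_integral hv y hs.1) t ⟨ht, le_rfl⟩

lemma shift_mem_ctrl {v : ℝ → Fin m → ℝ} (hv : v ∈ S.ctrl) (t : ℝ) :
    (fun u => v (u + t)) ∈ S.ctrl :=
  ⟨hv.1.comp (measurable_add_const t), fun _ => hv.2 _⟩

lemma φ_add {v : ℝ → Fin m → ℝ} (hv : v ∈ S.ctrl) (x : Fin d → ℝ) {t s : ℝ}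
    (ht : 0 ≤ t) (hs : 0 ≤ s) :
    S.φ x v (t + s) = S.φ (S.φ x v t) (fun u => v (u + t)) s := by
  rw [add_comm]
  refine S.eq_φ_of_integral_eq (S.shift_mem_ctrl hv t)
    ((S.φ_cont x v).comp (continuous_add_const t)) (fun u hu => ?_) s ⟨hs, le_rfl⟩
  have hu : 0 ≤ u + t := by linarith [hu.1]
  have hshift := intervalIntegral.integral_comp_add_right
    (a := 0) (b := u) (fun r => S.rhs v r (S.φ x v r)) t
  rw [zero_add] at hshift
  simp only [Function.comp_apply]
  rw [S.φ_eq_integral hv x hu, S.φ_eq_integral hv x ht, add_assoc]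
  change _ = x + ((∫ r in (0:ℝ)..t, S.rhs v r (S.φ x v r)) +
    ∫ r in (0:ℝ)..u, S.rhs v (r + t) (S.φ x v (r + t)))
  rw [hshift, intervalIntegral.integral_add_adjacent_intervals
      (S.intervalIntegrable_rhs hv (S.φ_cont x v) 0 t)
      (S.intervalIntegrable_rhs hv (S.φ_cont x v) t (u + t))]

lemma φ_congr_ctrl {v w : ℝ → Fin m → ℝ} (hv : v ∈ S.ctrl) (hw : w ∈ S.ctrl) (x : Fin d → ℝ)
    {T : ℝ} (h : EqOn v w (Ioo 0 T)) : ∀ u ∈ Icc (0:ℝ) T, S.φ x v u = S.φ x w u := by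
  refine S.eq_φ_of_integral_eq hw (S.φ_cont x v) fun u hu => ?_
  rw [S.φ_eq_integral hv x hu.1]
  congr 1
  refine intervalIntegral.integral_congr_Ioo_of_le hu.1 fun r hr => ?_
  simp only [rhs, h ⟨hr.1, hr.2.trans_le hu.2⟩]

noncomputable def concat (v w : ℝ → Fin m → ℝ) (t : ℝ) : ℝ → Fin m → ℝ :=
  fun s => if s < t then v s else w (s - t)

lemma concat_mem_ctrl {v w : ℝ → Fin m → ℝ} (hv : v ∈ S.ctrl) (hw : w ∈ S.ctrl) (t : ℝ) :
    concat v w t ∈ S.ctrl := by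
  refine ⟨Measurable.ite measurableSet_Iio hv.1 (hw.1.comp (measurable_sub_const t)),
    fun s => ?_⟩
  unfold concat
  split_ifs
  exacts [hv.2 s, hw.2 (s - t)]

lemma φ_mem_reach {v : ℝ → Fin m → ℝ} (hv : v ∈ S.ctrl) (x : Fin d → ℝ) {t : ℝ} (ht : 0 ≤ t) :
    S.φ x v t ∈ S.reach x :=
  ⟨v, hv, t, ht, rfl⟩

lemma mem_reach_self (hctrl : S.ctrl.Nonempty) (x : Fin d → ℝ) : x ∈ S.reach x :=
  let ⟨v, hv⟩ := hctrl
  ⟨v, hv, 0, le_rfl, S.φ_init x v⟩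

lemma reach_subset_of_mem {x y : Fin d → ℝ} (h : y ∈ S.reach x) : S.reach y ⊆ S.reach x := by
  obtain ⟨v, hv, t, ht, rfl⟩ := h
  rintro z ⟨w, hw, s, hs, rfl⟩
  have hc := S.concat_mem_ctrl hv hw t
  refine ⟨concat v w t, hc, t + s, by linarith, ?_⟩
  rw [S.φ_add hc x ht hs, S.φ_congr_ctrl hc hv x (fun r hr => if_pos hr.2) t ⟨ht, le_rfl⟩,
    S.φ_congr_ctrl (S.shift_mem_ctrl hc t) hw _ (T := s) (fun r hr => ?_) s ⟨hs, le_rfl⟩]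
  simp only [concat, if_neg (not_lt.2 (le_add_of_nonneg_left hr.1.le)), add_sub_cancel_right]

lemma closure_reach_subset_of_mem_closure {x y : Fin d → ℝ} (h : y ∈ closure (S.reach x)) :
    closure (S.reach y) ⊆ closure (S.reach x) := by
  refine closure_minimal ?_ isClosed_closure
  rintro z ⟨w, hw, s, hs, rfl⟩
  exact map_mem_closure (f := fun x' => S.φ x' w s) (S.continuous_φ_initial hw hs) h
    fun x' hx' => S.reach_subset_of_mem hx' (S.φ_mem_reach hw x' hs)

lemma closure_reach_subset_of_posInv {M : Set (Fin d → ℝ)} (hM : IsClosed M)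
    (hpos : S.posInv M) {x : Fin d → ℝ} (hx : x ∈ M) : closure (S.reach x) ⊆ M :=
  closure_minimal (fun _ ⟨v, hv, t, ht, hy⟩ => hy ▸ hpos x hx v hv t ht) hM

def accessibleSet (M : Set (Fin d → ℝ)) : Set (Fin d → ℝ) :=
  ⋂ x ∈ M, closure (S.reach x)

lemma isClosed_accessibleSet (M : Set (Fin d → ℝ)) : IsClosed (S.accessibleSet M) :=
  isClosed_biInter fun _ _ => isClosed_closure

lemma isInvControlSet_of_closure_reach_eq {A : Set (Fin d → ℝ)} (hA : A.Nonempty)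
    (h : ∀ p ∈ A, closure (S.reach p) = A) : S.isInvControlSet A := by
  obtain ⟨p₀, hp₀⟩ := hA
  obtain ⟨-, v, hv, -⟩ := closure_nonempty_iff.1 ⟨p₀, (h p₀ hp₀).symm ▸ hp₀⟩
  refine ⟨⟨⟨p₀, hp₀⟩, ⟨fun p hp => ?_, fun p hp => (h p hp).ge⟩, fun D hAD hD => ?_⟩,
    fun p hp => ?_⟩
  · exact ⟨v, hv, fun t ht => h p hp ▸ subset_closure (S.φ_mem_reach hv p ht)⟩
  · exact (hD.2 p₀ (hAD hp₀)).trans (h p₀ hp₀).le |>.antisymm hAD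
  · rw [h p hp, ← h p hp, closure_closure]

lemma closure_reach_eq_accessibleSet {M : Set (Fin d → ℝ)} (hsub : S.accessibleSet M ⊆ M)
    {p : Fin d → ℝ} (hp : p ∈ S.accessibleSet M) :
    closure (S.reach p) = S.accessibleSet M := by
  unfold accessibleSet at hsub hp ⊢
  exact (subset_iInter₂ fun x hx => S.closure_reach_subset_of_mem_closure
    (mem_iInter₂.1 hp x hx)).antisymm (iInter₂_subset p (hsub hp))

lemma isInvControlSet_accessibleSet {M : Set (Fin d → ℝ)} (hne : (S.accessibleSet M).Nonempty)
    (hsub : S.accessibleSet M ⊆ M) : S.isInvControlSet (S.accessibleSet M) :=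
  S.isInvControlSet_of_closure_reach_eq hne fun _ hp => S.closure_reach_eq_accessibleSet hsub hp

/-- Take `A` minimal, by Zorn's lemma, among the nonempty closed subsets of `cl 𝒪⁺(x)` that contain
the orbit closures of their points; minimality forces `cl 𝒪⁺(p) = A` for `p ∈ A`. -/
lemma exists_closure_reach_eq_subset (hctrl : S.ctrl.Nonempty) {x : Fin d → ℝ}
    (hK : IsCompact (closure (S.reach x))) :
    ∃ A ⊆ closure (S.reach x), A.Nonempty ∧ ∀ p ∈ A, closure (S.reach p) = A := by
  set F : Set (Set (Fin d → ℝ)) := {A | A.Nonempty ∧ IsClosed A ∧ A ⊆ closure (S.reach x) ∧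
    ∀ y ∈ A, closure (S.reach y) ⊆ A}
  have hclosure_mem : ∀ y ∈ closure (S.reach x), closure (S.reach y) ∈ F := fun y hy =>
    ⟨⟨y, subset_closure (S.mem_reach_self hctrl y)⟩, isClosed_closure,
      S.closure_reach_subset_of_mem_closure hy,
      fun _ hz => S.closure_reach_subset_of_mem_closure hz⟩
  have hchain : ∀ c ⊆ F, IsChain (· ⊆ ·) c → c.Nonempty → ∃ lb ∈ F, ∀ s ∈ c, lb ⊆ s := by
    intro c hcF hc ⟨U₀, hU₀⟩
    have : Nonempty c := ⟨⟨U₀, hU₀⟩⟩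
    refine ⟨⋂₀ c, ⟨?_, isClosed_sInter fun U hU => (hcF hU).2.1,
      (sInter_subset_of_mem hU₀).trans (hcF hU₀).2.2.1, fun y hy => subset_sInter fun U hU =>
        (hcF hU).2.2.2 y (sInter_subset_of_mem hU hy)⟩, fun _ => sInter_subset_of_mem⟩
    exact IsCompact.nonempty_sInter_of_directed_nonempty_isCompact_isClosed
      (fun a ha b hb => (hc.total ha hb).elim (fun h => ⟨a, ha, subset_rfl, h⟩)
        fun h => ⟨b, hb, h, subset_rfl⟩) (fun U hU => (hcF hU).1)
      (fun U hU => hK.of_isClosed_subset (hcF hU).2.1 (hcF hU).2.2.1) fun U hU => (hcF hU).2.1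
  obtain ⟨A, hA, hAmin⟩ := zorn_superset_nonempty F hchain _
    (hclosure_mem x (subset_closure (S.mem_reach_self hctrl x)))
  refine ⟨A, hA, hAmin.prop.1, fun p hp => (hAmin.prop.2.2.2 p hp).antisymm ?_⟩
  exact hAmin.2 (hclosure_mem p (hAmin.prop.2.2.1 hp)) (hAmin.prop.2.2.2 p hp)

lemma ctrl_nonempty_of_isInvControlSet {C : Set (Fin d → ℝ)} (hC : S.isInvControlSet C) :
    S.ctrl.Nonempty :=
  let ⟨c, hc⟩ := hC.1.1
  let ⟨v, hv, _⟩ := hC.1.2.1.1 c hc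
  ⟨v, hv⟩

lemma subset_closure_reach_of_unique {M C : Set (Fin d → ℝ)} (hM : IsCompact M)
    (hpos : S.posInv M) (hC : S.isInvControlSet C)
    (huniq : ∀ C', S.isInvControlSet C' → C' ⊆ M → C' = C) {x : Fin d → ℝ} (hx : x ∈ M) :
    C ⊆ closure (S.reach x) := by
  have hxM := S.closure_reach_subset_of_posInv hM.isClosed hpos hx
  obtain ⟨A, hAx, hA, hAeq⟩ := S.exists_closure_reach_eq_subset
    (S.ctrl_nonempty_of_isInvControlSet hC) (hM.of_isClosed_subset isClosed_closure hxM)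
  rw [← huniq A (S.isInvControlSet_of_closure_reach_eq hA hAeq) (hAx.trans hxM)]
  exact hAx

lemma eq_accessibleSet_of_unique {M C : Set (Fin d → ℝ)} (hM : IsCompact M)
    (hpos : S.posInv M) (hC : S.isInvControlSet C) (hCM : C ⊆ M)
    (huniq : ∀ C', S.isInvControlSet C' → C' ⊆ M → C' = C) : C = S.accessibleSet M := by
  obtain ⟨c, hc⟩ := hC.1.1
  have hCΓ : C ⊆ S.accessibleSet M :=
    subset_iInter₂ fun _ hx => S.subset_closure_reach_of_unique hM hpos hC huniq hx
  have hΓM : S.accessibleSet M ⊆ M := (iInter₂_subset c (hCM hc)).trans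
    (S.closure_reach_subset_of_posInv hM.isClosed hpos (hCM hc))
  exact (huniq _ (S.isInvControlSet_accessibleSet ⟨c, hCΓ hc⟩ hΓM) hΓM).symm

lemma accessibleSet_subset {M C : Set (Fin d → ℝ)} (hC : S.isInvControlSet C) (hCM : C ⊆ M)
    (hCcl : IsClosed C) : S.accessibleSet M ⊆ C := by
  obtain ⟨c, hc⟩ := hC.1.1
  rw [← hCcl.closure_eq, hC.2 c hc]
  exact iInter₂_subset c (hCM hc)

lemma eq_of_isInvControlSet_of_mem {C₁ C₂ : Set (Fin d → ℝ)} (h₁ : S.isInvControlSet C₁)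
    (h₁cl : IsClosed C₁) (h₂ : S.isInvControlSet C₂) (h₂cl : IsClosed C₂) {y : Fin d → ℝ}
    (hy₁ : y ∈ C₁) (hy₂ : y ∈ C₂) : C₁ = C₂ := by
  rw [← h₁cl.closure_eq, ← h₂cl.closure_eq, h₁.2 y hy₁, h₂.2 y hy₂]

end CAS

/-- Let `Γ = ⋂_{x ∈ M} cl 𝒪⁺(x)`.
(i) If `Γ` is a nonempty subset of `M`, then `Γ` is a closed invariant control set.
(ii) If `M` is compact and positively invariant and contains exactly one invariant
control set `C`, then `C = Γ`; in particular `C` is closed.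
(iii) If a compact positively invariant `M` contains two distinct closed invariant
control sets, then `Γ` is empty. -/
theorem stmt12 {d m : ℕ} (S : CAS d m) (M : Set (Fin d → ℝ)) :
    ((⋂ x ∈ M, closure (S.reach x)).Nonempty → (⋂ x ∈ M, closure (S.reach x)) ⊆ M →
      IsClosed (⋂ x ∈ M, closure (S.reach x)) ∧
        S.isInvControlSet (⋂ x ∈ M, closure (S.reach x))) ∧
    (IsCompact M → S.posInv M →
      ∀ C, S.isInvControlSet C → C ⊆ M →
        (∀ C', S.isInvControlSet C' → C' ⊆ M → C' = C) →
        C = ⋂ x ∈ M, closure (S.reach x) ∧ IsClosed C) ∧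
    (IsCompact M → S.posInv M →
      ∀ C₁ C₂, S.isInvControlSet C₁ → C₁ ⊆ M → IsClosed C₁ →
        S.isInvControlSet C₂ → C₂ ⊆ M → IsClosed C₂ → C₁ ≠ C₂ →
        (⋂ x ∈ M, closure (S.reach x)) = ∅) := by
  refine ⟨fun hne hsub => ⟨S.isClosed_accessibleSet M, S.isInvControlSet_accessibleSet hne hsub⟩,
    fun hM hpos C hC hCM huniq => ?_, fun _ _ C₁ C₂ h₁ h₁M h₁cl h₂ h₂M h₂cl hne => ?_⟩
  · have hCΓ := S.eq_accessibleSet_of_unique hM hpos hC hCM huniq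
    exact ⟨hCΓ, hCΓ ▸ S.isClosed_accessibleSet M⟩
  · refine eq_empty_of_forall_notMem fun y hy => hne ?_
    exact S.eq_of_isInvControlSet_of_mem h₁ h₁cl h₂ h₂cl
      (S.accessibleSet_subset h₁ h₁M h₁cl hy) (S.accessibleSet_subset h₂ h₂M h₂cl hy)
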